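/- Let λ be a cardinal with 2^{<λ} = λ > ω, and let Y be any subset of ᴧ2 (the set of functions from λ to 2) equipped with the bounded subspace topology. Then for every positively totally ordered monoid S there is no continuous weak λ⁺-measure space (Y, 𝔐, μ) with μ taking values in S. -/

import Mathlib

open Cardinal Set

noncomputable section

/-- The type of `ι`-indexed sequences in `A`, as a type synonym carrying the bounded topology. -/
def GSeq (ι A : Type) : Type := ι → A

/-- The bounded topology on `GSeq ι A`: the topology generated by the cones
`N_s = {y | ∀ i < b, y i = x i}`. -/
instance GSeq.topologicalSpace (ι A : Type) [LinearOrder ι] : TopologicalSpace (GSeq ι A) :=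
  TopologicalSpace.generateFrom
    {C : Set (GSeq ι A) | ∃ (x : ι → A) (b : ι), C = {y : GSeq ι A | ∀ i, i < b → y i = x i}}

/-- The weight of a topological space: the least cardinality of a basis for its topology. -/
def tweight (X : Type) [TopologicalSpace X] : Cardinal :=
  ⨅ B : {B : Set (Set X) // TopologicalSpace.IsTopologicalBasis B}, #↥(B.1)

/-- `S` is a positively totally ordered monoid (on top of given `AddMonoid` and `LinearOrder`
structures): the addition is weakly monotone in both arguments, `0` is the least element, and
the positive cone `S⁺ = {a | 0 < a}` is nonempty. -/
structure IsPTOM (S : Type*) [AddMonoid S] [LinearOrder S] : Prop where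
  add_le_add : ∀ a b c d : S, a ≤ b → c ≤ d → a + c ≤ b + d
  zero_le : ∀ a : S, 0 ≤ a
  exists_pos : ∃ a : S, 0 < a

/-- The sum of `f` over a finite set `F` of indices, taken in increasing order of the indices. -/
def finSum {ι : Type*} [LinearOrder ι] {S : Type*} [AddMonoid S] (f : ι → S) (F : Finset ι) : S :=
  ((F.sort (· ≤ ·)).map f).sum

/-- `μ` is a continuous measure: every singleton is measurable and has measure `0`. -/
def MeasureContinuous {X : Type} [TopologicalSpace X] {S : Type*} [Zero S]
    (M : Set (Set X)) (μ : Set X → S) : Prop :=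
  ∀ x : X, {x} ∈ M ∧ μ {x} = 0

/-- `(X, M, μ)` is a weak `λ⁺`-measure space (with `lam` playing the role of `λ`):
`M` contains all open sets and is closed under unions of at most `lam` many sets,
and `μ` satisfies the axioms (M1)-(M5). -/
structure IsWeakMeasureSpace (X : Type) [TopologicalSpace X] (lam : Cardinal)
    (S : Type*) [AddMonoid S] [LinearOrder S] (M : Set (Set X)) (μ : Set X → S) : Prop where
  open_mem : ∀ U : Set X, IsOpen U → U ∈ M
  sUnion_mem : ∀ 𝒜 : Set (Set X), 𝒜 ⊆ M → #↥𝒜 ≤ lam → ⋃₀ 𝒜 ∈ M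
  measure_empty : μ ∅ = 0
  measure_univ_pos : 0 < μ Set.univ
  mono : ∀ A B : Set X, A ∈ M → B ∈ M → A ⊆ B → μ A ≤ μ B
  additive : ∀ (γ : Ordinal) (A : γ.ToType → Set X), γ.card ≤ lam →
    (∀ i, A i ∈ M) → Pairwise (Function.onFun Disjoint A) →
    IsLUB {s : S | ∃ F : Finset γ.ToType, s = finSum (fun i => μ (A i)) F} (μ (⋃ i, A i))
  point_reg : ∀ (x : X) (γ : Ordinal) (A : γ.ToType → Set X),
    {x} ∈ M → γ.card ≤ lam →
    (∀ i, IsOpen (A i) ∧ x ∈ A i) →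
    (∀ U : Set X, IsOpen U → x ∈ U → ∃ i, A i ⊆ U) →
    IsGLB (Set.range fun i => μ (A i)) (μ {x})

/-!
Point regularity and continuity give `inf_b μ (K x b) = 0` for every `x`, where `K x b` is the
cone of points agreeing with `x` below `b`, and `2^{<λ} = λ` leaves at most `λ` cones. Stopping
every point at its first cone of measure `≤ t` partitions `Y` into at most `λ` cones, so
`μ Y ≤ c` as soon as all `k • t ≤ c`. With `t = 0` this gives a point `x` whose cones are all
positive; for `a` with `μ (K x a) < μ Y` the monoid must then be archimedean below `μ (K x a)`,
so disjoint families of positive open subsets of `K x a` are countable. For the sets branching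
off `x` this yields a countable cofinal set of levels, hence thresholds `t n` decreasing to `0`.
Refining the stopping partitions along `t n` and stopping at the first null cell splits `K x a`
into at most `λ + 2^ℵ₀ = λ` null pieces (null cells, cones below every `t n`, singletons), so
`μ (K x a) = 0`, a contradiction.
-/

namespace IsPTOM

variable {S : Type*} [AddMonoid S] [LinearOrder S]

theorem addLeftMono (hS : IsPTOM S) : AddLeftMono S :=
  ⟨fun _ _ _ h => hS.add_le_add _ _ _ _ le_rfl h⟩

theorem addRightMono (hS : IsPTOM S) : AddRightMono S :=
  ⟨fun _ _ _ h => hS.add_le_add _ _ _ _ h le_rfl⟩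

variable {ι : Type*} [LinearOrder ι] {f : ι → S} {F : Finset ι} {t : S}

theorem finSum_le_card_nsmul (hS : IsPTOM S) (h : ∀ i ∈ F, f i ≤ t) : finSum f F ≤ F.card • t := by
  have := hS.addLeftMono
  have := hS.addRightMono
  simpa [finSum] using List.sum_le_card_nsmul ((F.sort (· ≤ ·)).map f) t (by simpa using h)

theorem card_nsmul_le_finSum (hS : IsPTOM S) (h : ∀ i ∈ F, t ≤ f i) : F.card • t ≤ finSum f F := by
  have := hS.addLeftMono
  have := hS.addRightMono
  simpa [finSum] using List.card_nsmul_le_sum ((F.sort (· ≤ ·)).map f) t (by simpa using h)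

end IsPTOM

theorem Set.Nonempty.exists_isLeast_of_wellFoundedLT {ι : Type*} [LinearOrder ι] [WellFoundedLT ι]
    {s : Set ι} (hs : s.Nonempty) : ∃ b, IsLeast s b :=
  ⟨wellFounded_lt.min s hs, wellFounded_lt.min_mem s hs, fun _ hb => wellFounded_lt.min_le hb⟩

theorem Set.pairwiseDisjoint_range_of_mem_imp_eq {X : Type*} {f : X → Set X}
    (hf : ∀ y z, z ∈ f y → f z = f y) : (range f).PairwiseDisjoint id := by
  rintro _ ⟨y, rfl⟩ _ ⟨y', rfl⟩ hne
  refine Set.disjoint_left.2 fun w hw hw' => hne ?_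
  rw [← hf _ _ hw, hf _ _ hw']

theorem exists_monotone_cofinal_of_countable {ι : Type*} [LinearOrder ι] {L : Set ι}
    (hL : L.Countable) (hcof : ∀ β, ∃ b ∈ L, β ≤ b) [Nonempty ι] :
    ∃ lv : ℕ → ι, Monotone lv ∧ ∀ β, ∃ n, β ≤ lv n := by
  obtain ⟨b₀, hb₀, -⟩ := hcof (Classical.arbitrary ι)
  obtain ⟨f, rfl⟩ := hL.exists_eq_range ⟨b₀, hb₀⟩
  refine ⟨partialSups f, (partialSups f).monotone, fun β => ?_⟩
  obtain ⟨_, ⟨n, rfl⟩, hβ⟩ := hcof β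
  exact ⟨n, hβ.trans (le_partialSups f n)⟩

namespace GSeq

variable {ι A : Type} [LinearOrder ι]

def cone (x : GSeq ι A) (b : ι) : Set (GSeq ι A) := {y | ∀ i < b, y i = x i}

theorem isOpen_cone (x : GSeq ι A) (b : ι) : IsOpen (cone x b) :=
  TopologicalSpace.isOpen_generateFrom_of_mem ⟨x, b, rfl⟩

theorem mem_cone_self (x : GSeq ι A) (b : ι) : x ∈ cone x b := fun _ _ => rfl

theorem cone_anti (x : GSeq ι A) : Antitone (cone x) :=
  fun _ _ h _ hy i hi => hy i (hi.trans_le h)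

theorem cone_eq_of_mem {x z : GSeq ι A} {b b' : ι} (hz : z ∈ cone x b) (h : b' ≤ b) :
    cone z b' = cone x b' := by
  ext y
  refine forall₂_congr fun i hi => ?_
  rw [hz i (hi.trans_le h)]

theorem exists_cone_subset [Nonempty ι] {V : Set (GSeq ι A)} (hV : IsOpen V) :
    ∀ x ∈ V, ∃ b, cone x b ⊆ V := by
  induction hV with
  | basic C hC =>
    obtain ⟨x₀, b, rfl⟩ := hC
    exact fun x hx => ⟨b, fun y hy i hi => (hy i hi).trans (hx i hi)⟩
  | univ => exact fun _ _ => ⟨Classical.arbitrary ι, subset_univ _⟩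
  | inter U W _ _ ihU ihW =>
    intro x hx
    obtain ⟨b₁, h₁⟩ := ihU x hx.1
    obtain ⟨b₂, h₂⟩ := ihW x hx.2
    exact ⟨max b₁ b₂, fun y hy =>
      ⟨h₁ (cone_anti x (le_max_left _ _) hy), h₂ (cone_anti x (le_max_right _ _) hy)⟩⟩
  | sUnion 𝒮 _ ih =>
    rintro x ⟨U, hU, hxU⟩
    obtain ⟨b, hb⟩ := ih U hU x hxU
    exact ⟨b, hb.trans (subset_sUnion_of_mem hU)⟩

variable (Y : Set (GSeq ι A))

def coneIn (x : GSeq ι A) (b : ι) : Set Y := Subtype.val ⁻¹' cone x b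

def cones : Set (Set Y) := range fun q : GSeq ι A × ι => coneIn Y q.1 q.2

def sideIn (x : GSeq ι A) (b : ι) : Set Y := {y | y ∈ coneIn Y x b ∧ y.1 b ≠ x b}

variable {Y}

theorem coneIn_mem_cones (x : GSeq ι A) (b : ι) : coneIn Y x b ∈ cones Y := ⟨(x, b), rfl⟩

theorem isOpen_coneIn (x : GSeq ι A) (b : ι) : IsOpen (coneIn Y x b) :=
  (isOpen_cone x b).preimage continuous_subtype_val

theorem mem_coneIn_self (y : Y) (b : ι) : y ∈ coneIn Y y.1 b := mem_cone_self y.1 b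

theorem coneIn_anti (x : GSeq ι A) : Antitone (coneIn Y x) :=
  fun _ _ h => preimage_mono (cone_anti x h)

theorem coneIn_eq_of_mem {x : GSeq ι A} {z : Y} {b b' : ι} (hz : z ∈ coneIn Y x b) (h : b' ≤ b) :
    coneIn Y z.1 b' = coneIn Y x b' := by
  rw [coneIn, coneIn, cone_eq_of_mem hz h]

theorem exists_coneIn_subset [Nonempty ι] {U : Set Y} (hU : IsOpen U) {x : Y} (hx : x ∈ U) :
    ∃ b, coneIn Y x.1 b ⊆ U := by
  obtain ⟨V, hV, rfl⟩ := isOpen_induced_iff.1 hU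
  obtain ⟨b, hb⟩ := exists_cone_subset hV x.1 hx
  exact ⟨b, preimage_mono hb⟩

theorem isOpen_sideIn [NoMaxOrder ι] (x : GSeq ι A) (b : ι) : IsOpen (sideIn Y x b) := by
  refine isOpen_iff_forall_mem_open.2 fun y hy => ?_
  obtain ⟨b', hb'⟩ := exists_gt b
  refine ⟨coneIn Y y.1 b', fun z hz => ⟨fun i hi => ?_, ?_⟩, isOpen_coneIn _ _,
    mem_coneIn_self y b'⟩
  · rw [hz i (hi.trans hb'), hy.1 i hi]
  · rw [hz b hb']
    exact hy.2

theorem sideIn_subset_coneIn (x : GSeq ι A) (b : ι) : sideIn Y x b ⊆ coneIn Y x b :=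
  fun _ hy => hy.1

theorem disjoint_sideIn (x : GSeq ι A) {b b' : ι} (h : b ≠ b') :
    Disjoint (sideIn Y x b) (sideIn Y x b') := by
  refine Set.disjoint_left.2 fun y hy hy' => ?_
  rcases h.lt_or_gt with h | h
  · exact hy.2 (hy'.1 b h)
  · exact hy'.2 (hy.1 b' h)

theorem notMem_sideIn_self (x : Y) (b : ι) : x ∉ sideIn Y x.1 b := fun h => h.2 rfl

variable {p : ι → Set Y → Prop} {e : Y → ι}

theorem level_eq_of_mem (he : ∀ y, IsLeast {b | p b (coneIn Y y.1 b)} (e y)) {y z : Y}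
    (hz : z ∈ coneIn Y y.1 (e y)) : e z = e y := by
  have hcone : ∀ b ≤ e y, coneIn Y z.1 b = coneIn Y y.1 b := fun _ hb => coneIn_eq_of_mem hz hb
  have hzy : e z ≤ e y := (he z).2 (by rw [mem_ofPred_eq, hcone _ le_rfl]; exact (he y).1)
  exact le_antisymm hzy ((he y).2 (by rw [mem_ofPred_eq, ← hcone _ hzy]; exact (he z).1))

theorem coneIn_level_eq_of_mem (he : ∀ y, IsLeast {b | p b (coneIn Y y.1 b)} (e y)) {y z : Y}
    (hz : z ∈ coneIn Y y.1 (e y)) : coneIn Y z.1 (e z) = coneIn Y y.1 (e y) := by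
  rw [level_eq_of_mem he hz]
  exact coneIn_eq_of_mem hz le_rfl

theorem pairwiseDisjoint_range_coneIn_level
    (he : ∀ y, IsLeast {b | p b (coneIn Y y.1 b)} (e y)) :
    (range fun y => coneIn Y y.1 (e y)).PairwiseDisjoint id :=
  Set.pairwiseDisjoint_range_of_mem_imp_eq fun _ _ => coneIn_level_eq_of_mem he

variable [WellFoundedLT ι]

theorem iInter_coneIn_eq {κ : Type*} (y : Y) (e : κ → ι) :
    (⋂ n, coneIn Y y.1 (e n)) = {y} ∨ ∃ β, (⋂ n, coneIn Y y.1 (e n)) = coneIn Y y.1 β := by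
  by_cases hbdd : BddAbove (range e)
  · obtain ⟨β, hβ, hmin⟩ := Set.Nonempty.exists_isLeast_of_wellFoundedLT hbdd
    refine Or.inr ⟨β, ext fun z => ?_⟩
    simp only [mem_iInter, coneIn, mem_preimage, cone, mem_ofPred_eq]
    refine ⟨fun hz i hi => ?_, fun hz n i hi => hz i (hi.trans_le (hβ ⟨n, rfl⟩))⟩
    obtain ⟨_, ⟨n, rfl⟩, hn⟩ := not_forall₂.1 fun h => hi.not_ge (hmin h)
    exact hz n i (not_le.1 hn)
  · refine Or.inl (ext fun z => ⟨fun hz => Subtype.ext (funext fun i => ?_), ?_⟩)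
    · obtain ⟨_, ⟨n, rfl⟩, hn⟩ := not_bddAbove_iff.1 hbdd i
      exact mem_iInter.1 hz n i hn
    · rintro rfl
      exact mem_iInter.2 fun n => mem_coneIn_self z _

theorem exists_mem_sideIn {x y : Y} {β : ι} (hy : y ∈ coneIn Y x.1 β) (hne : y ≠ x) :
    ∃ b, β ≤ b ∧ y ∈ sideIn Y x.1 b := by
  obtain ⟨b, hb, hmin⟩ := Set.Nonempty.exists_isLeast_of_wellFoundedLT
    (s := {i | y.1 i ≠ x.1 i}) (Function.ne_iff.1 (Subtype.coe_ne_coe.2 hne))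
  refine ⟨b, not_lt.1 fun h => hb (hy b h), fun i hi => ?_, hb⟩
  by_contra h
  exact hi.not_ge (hmin h)

theorem mk_cones_le {lam : Cardinal} (hpow : (2 : Cardinal) ^< lam = lam) (hlam : ℵ₀ ≤ lam)
    (Y : Set (GSeq lam.ord.ToType (Fin 2))) : #(cones Y) ≤ lam := by
  let g : (Σ b : lam.ord.ToType, (Iio b → Fin 2)) → Set Y :=
    fun q => {y | ∀ i (h : i < q.1), y.1 i = q.2 ⟨i, h⟩}
  have hsub : cones Y ⊆ range g := by
    rintro _ ⟨⟨x, b⟩, rfl⟩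
    exact ⟨⟨b, fun i => x i⟩, rfl⟩
  refine (Cardinal.mk_le_mk_of_subset hsub).trans (Cardinal.mk_range_le.trans ?_)
  rw [Cardinal.mk_sigma]
  calc Cardinal.sum (fun b : lam.ord.ToType => #(Iio b → Fin 2))
      ≤ Cardinal.sum fun _ : lam.ord.ToType => lam := by
        refine Cardinal.sum_le_sum _ _ fun b => ?_
        rw [← Cardinal.power_def, Cardinal.mk_fin, Nat.cast_ofNat]
        exact (Cardinal.le_powerlt 2 (by simpa using Cardinal.mk_Iio_lt b (by simp))).trans hpow.le
    _ = lam := by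
        rw [Cardinal.sum_const', Cardinal.mk_toType, Cardinal.card_ord, Cardinal.mul_eq_self hlam]

end GSeq

section Pieces

variable {X : Type} (c : ℕ → X → Set X) (N : Set X → Prop)

open Classical in
/-- For a refining sequence of partitions `c n` (the cell of `y` being `c n y`), the partition
obtained by stopping at the first cell satisfying `N`. -/
def piece (y : X) : Set X :=
  if h : ∃ n, N (c n y) then c (Nat.find h) y else ⋂ n, c n y

variable {c N}

theorem piece_cases (y : X) :
    (∃ n, N (c n y) ∧ piece c N y = c n y) ∨ ((∀ n, ¬ N (c n y)) ∧ piece c N y = ⋂ n, c n y) := by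
  classical
  by_cases h : ∃ n, N (c n y)
  · exact Or.inl ⟨_, Nat.find_spec h, dif_pos h⟩
  · exact Or.inr ⟨not_exists.1 h, dif_neg h⟩

theorem piece_congr {y z : X} (h : ∀ n, (∀ k < n, ¬ N (c k y)) → c n z = c n y) :
    piece c N z = piece c N y := by
  classical
  by_cases hy : ∃ n, N (c n y)
  · have hle : ∀ k ≤ Nat.find hy, c k z = c k y := fun k hk =>
      h k fun j hj => Nat.find_min hy (hj.trans_le hk)
    have hz : ∃ n, N (c n z) := ⟨_, (hle _ le_rfl).symm ▸ Nat.find_spec hy⟩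
    have hfind : Nat.find hz = Nat.find hy := (Nat.find_eq_iff hz).2
      ⟨(hle _ le_rfl).symm ▸ Nat.find_spec hy, fun k hk => (hle k hk.le).symm ▸ Nat.find_min hy hk⟩
    rw [piece, piece, dif_pos hy, dif_pos hz, hfind, hle _ le_rfl]
  · have hall : ∀ n, c n z = c n y := fun n => h n fun k _ => not_exists.1 hy k
    have hz : ¬ ∃ n, N (c n z) := by simpa only [hall] using hy
    rw [piece, piece, dif_neg hy, dif_neg hz, iInter_congr hall]

variable (hself : ∀ n y, y ∈ c n y) (heq : ∀ n y z, z ∈ c n y → c n z = c n y)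
  (hanti : ∀ y, Antitone fun n => c n y)
include hself

theorem mem_piece_self (y : X) : y ∈ piece c N y := by
  rcases piece_cases (N := N) y with ⟨n, -, h⟩ | ⟨-, h⟩ <;> rw [h]
  · exact hself n y
  · exact mem_iInter.2 fun n => hself n y

omit hself
include hanti

theorem piece_subset (y : X) : piece c N y ⊆ c 0 y := by
  rcases piece_cases (N := N) y with ⟨n, -, h⟩ | ⟨-, h⟩ <;> rw [h]
  · exact hanti y n.zero_le
  · exact iInter_subset _ 0

theorem mem_of_mem_piece {y z : X} (hz : z ∈ piece c N y) {n : ℕ} (hn : ∀ k < n, ¬ N (c k y)) :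
    z ∈ c n y := by
  rcases piece_cases (N := N) y with ⟨m, hm, h⟩ | ⟨-, h⟩ <;> rw [h] at hz
  · exact hanti y (not_lt.1 fun hlt => hn m hlt hm) hz
  · exact mem_iInter.1 hz n

include heq

theorem piece_eq_of_mem {y z : X} (hz : z ∈ piece c N y) : piece c N z = piece c N y :=
  piece_congr fun _ hn => heq _ _ _ (mem_of_mem_piece hanti hz hn)

omit hanti heq

theorem mk_image_piece_le {κ : Cardinal} (h2 : 2 ^ ℵ₀ ≤ κ) {𝒦 : Set (Set X)} (h𝒦 : #𝒦 ≤ κ)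
    (hc : ∀ n y, c n y ∈ 𝒦) {D : Set X} (hcount : ∀ n, {C | C ∈ c n '' D ∧ ¬ N C}.Countable) :
    #(piece c N '' D) ≤ κ := by
  set CP := fun n => {C | C ∈ c n '' D ∧ ¬ N C}
  have hsub : piece c N '' D ⊆ 𝒦 ∪ range fun s : ∀ n, CP n => ⋂ n, (s n : Set X) := by
    rintro _ ⟨y, hy, rfl⟩
    rcases piece_cases (N := N) y with ⟨n, -, h⟩ | ⟨hN, h⟩
    · exact Or.inl (h ▸ hc n y)
    · exact Or.inr ⟨fun n => ⟨c n y, ⟨y, hy, rfl⟩, hN n⟩, h.symm⟩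
  have hseq : #(∀ n, CP n) ≤ 2 ^ ℵ₀ :=
    calc #(∀ n, CP n) ≤ Cardinal.prod fun _ : ℕ => ℵ₀ := by
          rw [Cardinal.mk_pi]
          exact Cardinal.prod_le_prod _ _ fun n => Cardinal.le_aleph0_iff_set_countable.2 (hcount n)
      _ = 2 ^ ℵ₀ := by
          rw [Cardinal.prod_const', Cardinal.mk_nat, Cardinal.aleph0_power_aleph0,
            Cardinal.two_power_aleph0]
  calc #(piece c N '' D) ≤ #𝒦 + #(range fun s : ∀ n, CP n => ⋂ n, (s n : Set X)) :=
        (Cardinal.mk_le_mk_of_subset hsub).trans (Cardinal.mk_union_le _ _)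
    _ ≤ κ + κ := add_le_add h𝒦 (Cardinal.mk_range_le.trans (hseq.trans h2))
    _ = κ := Cardinal.add_eq_self ((Cardinal.cantor ℵ₀).le.trans h2)

end Pieces

namespace IsWeakMeasureSpace

open GSeq

section General

variable {X : Type} [TopologicalSpace X] {lam : Cardinal} {S : Type*} [AddMonoid S] [LinearOrder S]
  {M : Set (Set X)} {μ : Set X → S} {P : Set (Set X)}

theorem exists_isLUB_enumeration (hW : IsWeakMeasureSpace X lam S M μ) (hPM : P ⊆ M)
    (hP : P.PairwiseDisjoint id) (hcard : #P ≤ lam) :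
    ∃ (γ : Ordinal.{0}) (A : γ.ToType → Set X), Function.Injective A ∧ range A = P ∧
      IsLUB {s | ∃ F : Finset γ.ToType, s = finSum (fun i => μ (A i)) F} (μ (⋃₀ P)) := by
  obtain ⟨e⟩ : Nonempty ((#P).ord.ToType ≃ P) := by
    rw [← Cardinal.eq, Cardinal.mk_toType, Cardinal.card_ord]
  have hA : range (fun i => (e i).1) = P := by
    rw [range_comp' Subtype.val e, e.range_eq_univ, image_univ, Subtype.range_coe]
  refine ⟨_, fun i => (e i).1, Subtype.val_injective.comp e.injective, hA, ?_⟩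
  have := hW.additive _ (fun i => (e i).1) (by rwa [Cardinal.card_ord]) (fun i => hPM (e i).2)
    fun i j hij => hP (e i).2 (e j).2 fun h => hij (e.injective (Subtype.ext h))
  rwa [← sUnion_range, hA] at this

variable (hS : IsPTOM S) (hW : IsWeakMeasureSpace X lam S M μ)
include hS hW

theorem measure_sUnion_le (hPM : P ⊆ M) (hP : P.PairwiseDisjoint id) (hcard : #P ≤ lam)
    {t c : S} (ht : ∀ C ∈ P, μ C ≤ t) (hc : ∀ k : ℕ, k • t ≤ c) : μ (⋃₀ P) ≤ c := by
  obtain ⟨γ, A, -, hA, hlub⟩ := hW.exists_isLUB_enumeration hPM hP hcard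
  refine hlub.2 ?_
  rintro _ ⟨F, rfl⟩
  exact (hS.finSum_le_card_nsmul fun i _ => ht _ (hA ▸ mem_range_self i)).trans (hc _)

theorem measure_sUnion_eq_zero (hPM : P ⊆ M) (hP : P.PairwiseDisjoint id) (hcard : #P ≤ lam)
    (h0 : ∀ C ∈ P, μ C = 0) : μ (⋃₀ P) = 0 :=
  le_antisymm (measure_sUnion_le hS hW hPM hP hcard (fun C hC => (h0 C hC).le)
    fun k => (nsmul_zero k).le) (hS.zero_le _)

theorem card_nsmul_le_measure_sUnion (hPM : P ⊆ M) (hP : P.PairwiseDisjoint id)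
    (hcard : #P ≤ lam) {T : Finset (Set X)} (hT : ↑T ⊆ P) {t : S} (ht : ∀ C ∈ T, t ≤ μ C) :
    T.card • t ≤ μ (⋃₀ P) := by
  classical
  obtain ⟨γ, A, hinj, hA, hlub⟩ := hW.exists_isLUB_enumeration hPM hP hcard
  have hF : (T.preimage A hinj.injOn).card = T.card := by
    rw [← Finset.card_image_of_injective _ hinj, Finset.image_preimage, Finset.filter_true_of_mem]
    exact fun C hC => hA ▸ hT hC
  rw [← hF]
  exact (hS.card_nsmul_le_finSum fun i hi => ht _ (Finset.mem_preimage.1 hi)).trans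
    (hlub.1 ⟨_, rfl⟩)

theorem countable_of_forall_pos {D : Set X} (hD : D ∈ M) (hPM : P ⊆ M) (hPD : ∀ C ∈ P, C ⊆ D)
    (hP : P.PairwiseDisjoint id) (hcard : #P ≤ lam) (hpos : ∀ C ∈ P, 0 < μ C)
    (harch : ∀ t, 0 < t → ∃ k : ℕ, μ D < k • t) : P.Countable := by
  have hcover : P ⊆ ⋃ k : ℕ, {C ∈ P | μ D < k • μ C} := fun C hC =>
    mem_iUnion.2 ((harch _ (hpos C hC)).imp fun _ hk => ⟨hC, hk⟩)
  refine (countable_iUnion fun k => Set.Finite.countable ?_).mono hcover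
  by_contra hinf
  obtain ⟨T, hTsub, hTcard⟩ := Set.Infinite.exists_subset_card_eq hinf (k + 1)
  obtain ⟨C, hCT, hCmin⟩ := T.exists_min_image μ (Finset.card_pos.1 (hTcard ▸ k.succ_pos))
  have hsum : (k + 1) • μ C ≤ μ D := by
    rw [← hTcard]
    exact (card_nsmul_le_measure_sUnion hS hW hPM hP hcard (fun C' hC' => (hTsub hC').1)
      hCmin).trans (hW.mono _ _ (hW.sUnion_mem P hPM hcard) hD (sUnion_subset hPD))
  have := hS.addLeftMono
  exact (hTsub hCT).2.not_ge ((nsmul_le_nsmul_left (hS.zero_le _) k.le_succ).trans hsum)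

theorem measure_eq_zero_of_refining_partitions (h2 : 2 ^ ℵ₀ ≤ lam) {c : ℕ → X → Set X}
    (hself : ∀ n y, y ∈ c n y) (heq : ∀ n y z, z ∈ c n y → c n z = c n y)
    (hanti : ∀ y, Antitone fun n => c n y) {𝒦 : Set (Set X)} (h𝒦M : 𝒦 ⊆ M) (h𝒦 : #𝒦 ≤ lam)
    (hc𝒦 : ∀ n y, c n y ∈ 𝒦) (hinter : ∀ y, (⋂ n, c n y) ∈ M ∧ μ (⋂ n, c n y) = 0)
    {D : Set X} (hD : D ∈ M) (hcD : ∀ y ∈ D, c 0 y ⊆ D)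
    (harch : ∀ s, 0 < s → ∃ k : ℕ, μ D < k • s) : μ D = 0 := by
  set N : Set X → Prop := fun C => μ C = 0
  have hcover : ⋃₀ (piece c N '' D) = D := subset_antisymm
    (sUnion_subset (by rintro _ ⟨y, hy, rfl⟩; exact (piece_subset hanti y).trans (hcD y hy)))
    fun y hy => ⟨_, ⟨y, hy, rfl⟩, mem_piece_self hself y⟩
  have hnull : ∀ y, piece c N y ∈ M ∧ μ (piece c N y) = 0 := by
    intro y
    rcases piece_cases (N := N) y with ⟨n, hn, h⟩ | ⟨-, h⟩ <;> rw [h]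
    · exact ⟨h𝒦M (hc𝒦 n y), hn⟩
    · exact hinter y
  have hcount : ∀ n, {C | C ∈ c n '' D ∧ ¬ N C}.Countable := by
    intro n
    refine hW.countable_of_forall_pos hS hD ?_ ?_
      ((pairwiseDisjoint_range_of_mem_imp_eq (heq n)).subset
        fun C hC => image_subset_range _ _ hC.1)
      ((Cardinal.mk_le_mk_of_subset ?_).trans h𝒦) (fun C hC => (hS.zero_le _).lt_of_ne' hC.2) harch
    · rintro _ ⟨⟨y, -, rfl⟩, -⟩
      exact h𝒦M (hc𝒦 n y)
    · rintro _ ⟨⟨y, hy, rfl⟩, -⟩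
      exact (hanti y n.zero_le).trans (hcD y hy)
    · rintro _ ⟨⟨y, -, rfl⟩, -⟩
      exact hc𝒦 n y
  rw [← hcover]
  refine hW.measure_sUnion_eq_zero hS ?_ ?_ (mk_image_piece_le h2 h𝒦 hc𝒦 hcount) ?_
  · rintro _ ⟨y, -, rfl⟩
    exact (hnull y).1
  · exact (pairwiseDisjoint_range_of_mem_imp_eq fun _ _ hz => piece_eq_of_mem heq hanti hz).subset
      (image_subset_range _ _)
  · rintro _ ⟨y, -, rfl⟩
    exact (hnull y).2

end General

section WellOrdered

variable {ι A : Type} [LinearOrder ι] {Y : Set (GSeq ι A)} {lam : Cardinal}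
  {S : Type*} [AddMonoid S] [LinearOrder S] {M : Set (Set Y)} {μ : Set Y → S}
  (hS : IsPTOM S) (hW : IsWeakMeasureSpace Y lam S M μ)

include hW in
theorem measure_coneIn_anti (x : GSeq ι A) : Antitone fun b => μ (coneIn Y x b) :=
  fun _ _ h => hW.mono _ _ (hW.open_mem _ (isOpen_coneIn _ _)) (hW.open_mem _ (isOpen_coneIn _ _))
    (coneIn_anti x h)

variable [WellFoundedLT ι]
include hS hW

theorem measure_univ_le_of_forall_exists_coneIn_le (hK : #(cones Y) ≤ lam) {t c : S}
    (hcell : ∀ y : Y, ∃ b, μ (coneIn Y y.1 b) ≤ t) (hc : ∀ k : ℕ, k • t ≤ c) : μ Set.univ ≤ c := by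
  choose e he using fun y : Y => Set.Nonempty.exists_isLeast_of_wellFoundedLT (hcell y)
  have hcover : ⋃₀ range (fun y => coneIn Y y.1 (e y)) = Set.univ :=
    eq_univ_of_forall fun y => ⟨_, ⟨y, rfl⟩, mem_coneIn_self y _⟩
  rw [← hcover]
  refine hW.measure_sUnion_le hS ?_
    (pairwiseDisjoint_range_coneIn_level (p := fun _ C => μ C ≤ t) he)
    ((Cardinal.mk_le_mk_of_subset (range_subset_iff.2 fun _ => coneIn_mem_cones _ _)).trans hK)
    ?_ hc
  · rintro _ ⟨y, rfl⟩
    exact hW.open_mem _ (isOpen_coneIn _ _)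
  · rintro _ ⟨y, rfl⟩
    exact (he y).1

theorem exists_forall_measure_coneIn_pos (hK : #(cones Y) ≤ lam) :
    ∃ x : Y, ∀ b, 0 < μ (coneIn Y x.1 b) := by
  by_contra! h
  exact hW.measure_univ_pos.not_ge
    (measure_univ_le_of_forall_exists_coneIn_le hS hW hK h fun k => (nsmul_zero k).le)

theorem iInter_coneIn_mem_and_measure_eq_zero (hC : MeasureContinuous M μ) {t : ℕ → S}
    (ht : IsGLB (range t) 0) (y : Y) {e : ℕ → ι}
    (he : ∀ n, μ (coneIn Y y.1 (e n)) ≤ t n) :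
    (⋂ n, coneIn Y y.1 (e n)) ∈ M ∧ μ (⋂ n, coneIn Y y.1 (e n)) = 0 := by
  rcases iInter_coneIn_eq y e with h | ⟨β, h⟩ <;> rw [h]
  · exact hC y
  · refine ⟨hW.open_mem _ (isOpen_coneIn _ _),
      le_antisymm (ht.2 (forall_mem_range.2 fun n => ?_)) (hS.zero_le _)⟩
    exact (hW.mono _ _ (hW.open_mem _ (isOpen_coneIn _ _)) (hW.open_mem _ (isOpen_coneIn _ _))
      (h ▸ iInter_subset _ n)).trans (he n)

end WellOrdered

section InitialOrdinal

variable {lam : Cardinal} {A : Type} {Y : Set (GSeq lam.ord.ToType A)}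
  {S : Type*} [AddMonoid S] [LinearOrder S] {M : Set (Set Y)} {μ : Set Y → S}
  (hS : IsPTOM S) (hW : IsWeakMeasureSpace Y lam S M μ) (hC : MeasureContinuous M μ)

section Regularity

variable [Nonempty lam.ord.ToType]
include hW hC

theorem isGLB_measure_coneIn (x : Y) : IsGLB (range fun b => μ (coneIn Y x.1 b)) 0 := by
  have h := hW.point_reg x lam.ord (fun b => coneIn Y x.1 b) (hC x).1 (Cardinal.card_ord lam).le
    (fun b => ⟨isOpen_coneIn _ _, mem_coneIn_self x b⟩) fun _ hU hxU => exists_coneIn_subset hU hxU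
  rwa [(hC x).2] at h

theorem exists_measure_coneIn_lt (x : Y) {t : S} (ht : 0 < t) : ∃ b, μ (coneIn Y x.1 b) < t := by
  by_contra! h
  exact ht.not_ge ((isGLB_measure_coneIn hW hC x).2 (forall_mem_range.2 h))

end Regularity

include hS hW hC

theorem exists_measure_sideIn_pos (hlam : ℵ₀ ≤ lam) {x : Y} (hx : ∀ b, 0 < μ (coneIn Y x.1 b))
    [NoMaxOrder lam.ord.ToType] (β : lam.ord.ToType) :
    ∃ b, β ≤ b ∧ 0 < μ (sideIn Y x.1 b) := by
  -- otherwise `coneIn Y x.1 β`, the union of `{x}` and the sides past `β`, would be null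
  by_contra! h
  set sides := sideIn Y x.1 '' Ici β
  have hcover : ⋃₀ insert {x} sides = coneIn Y x.1 β := by
    ext y
    constructor
    · rintro ⟨_, rfl | ⟨b, hb, rfl⟩, hy⟩
      · rw [mem_singleton_iff.1 hy]
        exact mem_coneIn_self x β
      · exact coneIn_anti x.1 hb (sideIn_subset_coneIn x.1 b hy)
    · intro hy
      by_cases hyx : y = x
      · exact ⟨{x}, mem_insert _ _, hyx⟩
      · obtain ⟨b, hb, hyb⟩ := exists_mem_sideIn hy hyx
        exact ⟨_, mem_insert_of_mem _ ⟨b, hb, rfl⟩, hyb⟩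
  have hsides : sides.PairwiseDisjoint id := by
    rintro _ ⟨b, -, rfl⟩ _ ⟨b', -, rfl⟩ hne
    exact disjoint_sideIn x.1 fun h => hne (by rw [h])
  have hcard : #(insert {x} sides : Set (Set Y)) ≤ lam :=
    calc #(insert {x} sides : Set (Set Y)) ≤ #(lam.ord.ToType) + 1 := by
          grw [Cardinal.mk_insert_le, Cardinal.mk_image_le, Cardinal.mk_set_le]
      _ = lam := by rw [Cardinal.mk_toType, Cardinal.card_ord, Cardinal.add_one_eq hlam]
  refine (hx β).ne' (hcover ▸ hW.measure_sUnion_eq_zero hS ?_ ?_ hcard ?_)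
  · rintro _ (rfl | ⟨b, -, rfl⟩)
    · exact (hC x).1
    · exact hW.open_mem _ (isOpen_sideIn x.1 b)
  · refine hsides.insert fun _ ⟨b, _, hb⟩ _ => hb ▸ ?_
    exact disjoint_singleton_left.2 (notMem_sideIn_self x b)
  · rintro _ (rfl | ⟨b, hb, rfl⟩)
    · exact (hC x).2
    · exact le_antisymm (h b hb) (hS.zero_le _)

theorem exists_pos_antitone_isGLB_zero (hlam : ℵ₀ ≤ lam) [Nonempty lam.ord.ToType]
    [NoMaxOrder lam.ord.ToType]
    {x : Y} (hx : ∀ b, 0 < μ (coneIn Y x.1 b)) {a : lam.ord.ToType}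
    (harch : ∀ s, 0 < s → ∃ k : ℕ, μ (coneIn Y x.1 a) < k • s) :
    ∃ t : ℕ → S, (∀ n, 0 < t n) ∧ Antitone t ∧ IsGLB (range t) 0 := by
  let L := {b | a ≤ b ∧ 0 < μ (sideIn Y x.1 b)}
  have hcof : ∀ β, ∃ b ∈ L, β ≤ b := fun β =>
    (hW.exists_measure_sideIn_pos hS hC hlam hx (max β a)).imp fun _ hb =>
      ⟨⟨(le_max_right _ _).trans hb.1, hb.2⟩, (le_max_left _ _).trans hb.1⟩
  have hinj : InjOn (sideIn Y x.1) L := by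
    intro b hb b' _ h
    by_contra hne
    have hempty : sideIn Y x.1 b = ∅ := by
      have := disjoint_sideIn (Y := Y) x.1 hne
      rwa [← h, disjoint_self, bot_eq_empty] at this
    exact hb.2.ne' (hempty ▸ hW.measure_empty)
  have hL : L.Countable := by
    refine countable_of_injective_of_countable_image hinj
      (hW.countable_of_forall_pos hS (hW.open_mem _ (isOpen_coneIn x.1 a)) ?_ ?_ ?_ ?_ ?_ harch)
    · rintro _ ⟨b, -, rfl⟩
      exact hW.open_mem _ (isOpen_sideIn x.1 b)
    · rintro _ ⟨b, hb, rfl⟩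
      exact (sideIn_subset_coneIn x.1 b).trans (coneIn_anti x.1 hb.1)
    · rintro _ ⟨b, -, rfl⟩ _ ⟨b', -, rfl⟩ hne
      exact disjoint_sideIn x.1 fun h => hne (by rw [h])
    · grw [Cardinal.mk_image_le, Cardinal.mk_set_le, Cardinal.mk_toType, Cardinal.card_ord]
    · rintro _ ⟨b, hb, rfl⟩
      exact hb.2
  obtain ⟨lv, hmono, hlv⟩ := exists_monotone_cofinal_of_countable hL hcof
  refine ⟨fun n => μ (coneIn Y x.1 (lv n)), fun n => hx _,
    (hW.measure_coneIn_anti x.1).comp_monotone hmono,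
    forall_mem_range.2 fun n => hS.zero_le _, fun w hw => ?_⟩
  refine (isGLB_measure_coneIn hW hC x).2 (forall_mem_range.2 fun b => ?_)
  obtain ⟨n, hn⟩ := hlv b
  exact (hw ⟨n, rfl⟩).trans (hW.measure_coneIn_anti x.1 hn)

theorem measure_coneIn_eq_zero_of_archimedean [Nonempty lam.ord.ToType]
    (hK : #(cones Y) ≤ lam) (h2 : 2 ^ ℵ₀ ≤ lam) {t : ℕ → S} (ht_pos : ∀ n, 0 < t n)
    (ht_anti : Antitone t) (ht_inf : IsGLB (range t) 0)
    (x : GSeq lam.ord.ToType A) (a : lam.ord.ToType)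
    (harch : ∀ s, 0 < s → ∃ k : ℕ, μ (coneIn Y x a) < k • s) : μ (coneIn Y x a) = 0 := by
  have hexit : ∀ n (y : Y), ∃ b, a ≤ b ∧ μ (coneIn Y y.1 b) ≤ t n := fun n y =>
    let ⟨b, hb⟩ := hW.exists_measure_coneIn_lt hC y (ht_pos n)
    ⟨max b a, le_max_right b a, (hW.measure_coneIn_anti y.1 (le_max_left b a)).trans hb.le⟩
  choose e he using fun n y => Set.Nonempty.exists_isLeast_of_wellFoundedLT (hexit n y)
  have hanti : ∀ y, Antitone fun n => coneIn Y y.1 (e n y) := fun y =>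
    antitone_nat_of_succ_le fun n => coneIn_anti _
      ((he n y).2 ⟨(he (n + 1) y).1.1, (he (n + 1) y).1.2.trans (ht_anti n.le_succ)⟩)
  refine hW.measure_eq_zero_of_refining_partitions hS h2 (fun n y => mem_coneIn_self y _)
    (fun n _ _ => coneIn_level_eq_of_mem (p := fun b C => a ≤ b ∧ μ C ≤ t n) (he n)) hanti
    (by rintro _ ⟨q, rfl⟩; exact hW.open_mem _ (isOpen_coneIn _ _)) hK
    (fun _ _ => coneIn_mem_cones _ _)
    (fun y => hW.iInter_coneIn_mem_and_measure_eq_zero hS hC ht_inf y fun n => (he n y).1.2)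
    (hW.open_mem _ (isOpen_coneIn x a)) (fun y hy => ?_) harch
  rw [← coneIn_eq_of_mem hy le_rfl]
  exact coneIn_anti _ (he 0 y).1.1

end InitialOrdinal

end IsWeakMeasureSpace

open GSeq in
/-- if `2^{<λ} = λ > ω` and `Y ⊆ ᴧ2` (with the bounded subspace topology), then
there is no continuous weak `λ⁺`-measure space on `Y` over any positively totally ordered
monoid. -/
theorem statement_2 (lam : Cardinal) (hpow : (2 : Cardinal) ^< lam = lam) (hlam : ℵ₀ < lam)
    (Y : Set (GSeq lam.ord.ToType (Fin 2)))
    (S : Type) [AddMonoid S] [LinearOrder S] (hS : IsPTOM S) :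
    ¬ ∃ (M : Set (Set ↥Y)) (μ : Set ↥Y → S),
        IsWeakMeasureSpace ↥Y lam S M μ ∧ MeasureContinuous M μ := by
  rintro ⟨M, μ, hW, hC⟩
  have : Nonempty lam.ord.ToType :=
    Ordinal.nonempty_toType_iff.2 (Cardinal.ord_eq_zero.not.2 (Cardinal.aleph0_pos.trans hlam).ne')
  have : NoMaxOrder lam.ord.ToType := Cardinal.noMaxOrder hlam.le
  have h2 : 2 ^ ℵ₀ ≤ lam := (Cardinal.le_powerlt 2 hlam).trans hpow.le
  have hK := mk_cones_le hpow hlam.le Y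
  obtain ⟨x, hx⟩ := hW.exists_forall_measure_coneIn_pos hS hK
  obtain ⟨a, ha⟩ := hW.exists_measure_coneIn_lt hC x hW.measure_univ_pos
  by_cases harch : ∀ s, 0 < s → ∃ k : ℕ, μ (coneIn Y x.1 a) < k • s
  · obtain ⟨t, ht_pos, ht_anti, ht_inf⟩ := hW.exists_pos_antitone_isGLB_zero hS hC hlam.le hx harch
    exact (hx a).ne' (hW.measure_coneIn_eq_zero_of_archimedean hS hC hK h2 ht_pos ht_anti ht_inf
      x.1 a harch)
  · push Not at harch
    obtain ⟨s, hs, hk⟩ := harch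
    exact ha.not_ge (hW.measure_univ_le_of_forall_exists_coneIn_le hS hK
      (fun y => (hW.exists_measure_coneIn_lt hC y hs).imp fun _ => le_of_lt) hk)

end
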